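/- arXiv:1904.12395 — 2 statements merged into one kernel-verified Lean document; each statement's English description precedes it below -/
import Mathlib

section
/- Let ℓ > 0 and let φ : ℝ → ℝ be differentiable with φ(0) = 1, with φ(x) → 0 as x → +∞ and as x → −∞, and integrand x ↦ (1/(2ℓ))·φ(x)² + (ℓ/2)·φ'(x)² integrable on ℝ. Then ∫_ℝ [ (1/(2ℓ))·φ(x)² + (ℓ/2)·φ'(x)² ] dx ≥ 1. -/
/-!
By AM–GM, `|φ φ'| ≤ φ²/(2ℓ) + (ℓ/2) φ'²` pointwise, and `φ φ'` is the derivative of `φ²/2`.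
On each of the half-lines `(-∞, 0]` and `(0, ∞)` the fundamental theorem of calculus gives
`|∫ φ φ'| = φ(0)²/2 = 1/2`, so the energy is at least `∫ |φ φ'| ≥ 1/2 + 1/2`.
-/

open MeasureTheory Filter Set

lemma abs_mul_le_sq_div_add_mul_sq {ℓ : ℝ} (hℓ : 0 < ℓ) (a b : ℝ) :
    |a * b| ≤ 1 / (2 * ℓ) * a ^ 2 + ℓ / 2 * b ^ 2 := by
  have h2ℓ : 0 < 2 * ℓ := by positivity
  have hrhs : 1 / (2 * ℓ) * a ^ 2 + ℓ / 2 * b ^ 2 = (a ^ 2 + ℓ ^ 2 * b ^ 2) / (2 * ℓ) := by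
    field_simp
  rw [hrhs, le_div_iff₀ h2ℓ, abs_mul]
  nlinarith [sq_nonneg (|a| - ℓ * |b|), sq_abs a, sq_abs b, abs_nonneg a, abs_nonneg b]

section HalfLine

variable {φ : ℝ → ℝ}

lemma hasDerivAt_sq_div_two (hφ : Differentiable ℝ φ) (x : ℝ) :
    HasDerivAt (fun y => φ y ^ 2 / 2) (φ x * deriv φ x) x := by
  refine (((hφ x).hasDerivAt.fun_pow 2).div_const 2).congr_deriv ?_
  ring

lemma tendsto_sq_div_two {l : Filter ℝ} (h : Tendsto φ l (nhds 0)) :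
    Tendsto (fun y => φ y ^ 2 / 2) l (nhds 0) := by
  simpa using (h.pow 2).div_const 2

lemma integral_Ioi_mul_deriv (hφ : Differentiable ℝ φ) (htop : Tendsto φ atTop (nhds 0))
    (a : ℝ) (hint : IntegrableOn (fun x => φ x * deriv φ x) (Ioi a)) :
    ∫ x in Ioi a, φ x * deriv φ x = -(φ a ^ 2 / 2) := by
  rw [integral_Ioi_of_hasDerivAt_of_tendsto
    (hasDerivAt_sq_div_two hφ a).continuousAt.continuousWithinAt
    (fun x _ => hasDerivAt_sq_div_two hφ x) hint (tendsto_sq_div_two htop), zero_sub]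

lemma integral_Iic_mul_deriv (hφ : Differentiable ℝ φ) (hbot : Tendsto φ atBot (nhds 0))
    (a : ℝ) (hint : IntegrableOn (fun x => φ x * deriv φ x) (Iic a)) :
    ∫ x in Iic a, φ x * deriv φ x = φ a ^ 2 / 2 := by
  rw [integral_Iic_of_hasDerivAt_of_tendsto
    (hasDerivAt_sq_div_two hφ a).continuousAt.continuousWithinAt
    (fun x _ => hasDerivAt_sq_div_two hφ x) hint (tendsto_sq_div_two hbot), sub_zero]

lemma sq_le_integral_abs_mul_deriv (hφ : Differentiable ℝ φ)
    (htop : Tendsto φ atTop (nhds 0)) (hbot : Tendsto φ atBot (nhds 0))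
    (hint : Integrable (fun x => φ x * deriv φ x)) (a : ℝ) :
    φ a ^ 2 ≤ ∫ x, |φ x * deriv φ x| := by
  have hleft : φ a ^ 2 / 2 ≤ ∫ x in Iic a, |φ x * deriv φ x| := by
    calc φ a ^ 2 / 2 = |∫ x in Iic a, φ x * deriv φ x| := by
          rw [integral_Iic_mul_deriv hφ hbot a hint.integrableOn, abs_of_nonneg (by positivity)]
      _ ≤ ∫ x in Iic a, |φ x * deriv φ x| := abs_integral_le_integral_abs
  have hright : φ a ^ 2 / 2 ≤ ∫ x in Ioi a, |φ x * deriv φ x| := by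
    calc φ a ^ 2 / 2 = |∫ x in Ioi a, φ x * deriv φ x| := by
          rw [integral_Ioi_mul_deriv hφ htop a hint.integrableOn, abs_neg,
            abs_of_nonneg (by positivity)]
      _ ≤ ∫ x in Ioi a, |φ x * deriv φ x| := abs_integral_le_integral_abs
  rw [← intervalIntegral.integral_Iic_add_Ioi hint.abs.integrableOn hint.abs.integrableOn]
  linarith

end HalfLine

/-- Lower bound for the regularized crack surface energy: any differentiable profile
with `φ(0) = 1` decaying to 0 at ±∞ has total crack surface energy at least 1. -/
theorem stmt3 (ℓ : ℝ) (hℓ : 0 < ℓ) (φ : ℝ → ℝ)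
    (hdiff : Differentiable ℝ φ) (hφ0 : φ 0 = 1)
    (htop : Filter.Tendsto φ Filter.atTop (nhds 0))
    (hbot : Filter.Tendsto φ Filter.atBot (nhds 0))
    (hint : MeasureTheory.Integrable
      (fun x => (1 / (2 * ℓ)) * (φ x) ^ 2 + (ℓ / 2) * (deriv φ x) ^ 2)) :
    1 ≤ ∫ x : ℝ, ((1 / (2 * ℓ)) * (φ x) ^ 2 + (ℓ / 2) * (deriv φ x) ^ 2) := by
  have hbound : ∀ x, |φ x * deriv φ x| ≤ 1 / (2 * ℓ) * φ x ^ 2 + ℓ / 2 * deriv φ x ^ 2 :=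
    fun x => abs_mul_le_sq_div_add_mul_sq hℓ (φ x) (deriv φ x)
  have hmul : Integrable (fun x => φ x * deriv φ x) :=
    hint.mono' (hdiff.continuous.measurable.mul (measurable_deriv φ)).aestronglyMeasurable
      (ae_of_all _ hbound)
  calc (1 : ℝ) = φ 0 ^ 2 := by rw [hφ0, one_pow]
    _ ≤ ∫ x, |φ x * deriv φ x| := sq_le_integral_abs_mul_deriv hdiff htop hbot hmul 0
    _ ≤ _ := integral_mono hmul.abs hint hbound
end

section
/- Let λ, μ be real numbers, and define the 4×4 real matrices Cᵉ with rows (λ+2μ, λ, λ, 0), (λ, λ+2μ, λ, 0), (λ, λ, λ+2μ, 0), (0, 0, 0, μ), and P = (1/2)·the matrix with rows (1,1,0,0), (1,1,0,0), (0,0,0,0), (0,0,0,0). Let g, h, h′ be real scalars and set ℂ = g·Cᵉ·((h−1)·P + I) + h′·Cᵉ·P. Then for every natural number m and every real 4×m matrix B whose third row is identically zero, the m×m matrix Bᵀ·ℂ·B is symmetric. -/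
open Matrix

/-!
`ℂ = g·Cᵉ + (g(h−1) + h′)·Cᵉ·P` fails to be symmetric only through the `z`-row of `Cᵉ·P`.
A strain–displacement matrix with vanishing `z`-row satisfies `B = D·B` for the in-plane
projection `D = diag(1, 1, 0, 1)`, so `Bᵀ·ℂ·B = Bᵀ·(D·ℂ·D)·B`, and compressing by `D`
turns `Cᵉ·P` into `(λ + μ)·(e₁ + e₂)(e₁ + e₂)ᵀ`, which is symmetric.
-/

theorem Matrix.IsSymm.transpose_mul_mul {m n α : Type*} [Fintype n] [CommSemiring α]
    {A : Matrix n n α} (hA : A.IsSymm) (B : Matrix n m α) : (Bᵀ * A * B).IsSymm := by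
  simp only [IsSymm, transpose_mul, transpose_transpose, hA.eq, Matrix.mul_assoc]

theorem Matrix.isSymm_transpose_mul_mul_of_mul_eq {m n α : Type*} [Fintype n] [CommSemiring α]
    {A D : Matrix n n α} {B : Matrix n m α} (hA : (Dᵀ * A * D).IsSymm) (hB : D * B = B) :
    (Bᵀ * A * B).IsSymm := by
  rw [← hB]
  simpa only [transpose_mul, Matrix.mul_assoc] using hA.transpose_mul_mul B

section PlaneStrain

variable (lam mu : ℝ)

def elasticModulus : Matrix (Fin 4) (Fin 4) ℝ :=
  !![lam + 2 * mu, lam, lam, 0;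
     lam, lam + 2 * mu, lam, 0;
     lam, lam, lam + 2 * mu, 0;
     0, 0, 0, mu]

noncomputable def volumetricProjection : Matrix (Fin 4) (Fin 4) ℝ :=
  (1 / 2 : ℝ) • !![1, 1, 0, 0; 1, 1, 0, 0; 0, 0, 0, 0; 0, 0, 0, 0]

def inPlaneProjection : Matrix (Fin 4) (Fin 4) ℝ :=
  diagonal ![1, 1, 0, 1]

theorem elasticModulus_isSymm : (elasticModulus lam mu).IsSymm := by
  ext i j
  fin_cases i <;> fin_cases j <;> rfl

theorem inPlaneProjection_conj_elasticModulus_mul_volumetricProjection_isSymm :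
    (inPlaneProjectionᵀ * (elasticModulus lam mu * volumetricProjection) *
      inPlaneProjection).IsSymm := by
  ext i j
  fin_cases i <;> fin_cases j <;>
    simp [elasticModulus, volumetricProjection, inPlaneProjection, mul_apply, Fin.sum_univ_four,
      add_comm]

theorem inPlaneProjection_mul_of_row_two_eq_zero {m : ℕ} {B : Matrix (Fin 4) (Fin m) ℝ}
    (hB : ∀ j, B 2 j = 0) : inPlaneProjection * B = B := by
  ext i j
  fin_cases i <;> simp [inPlaneProjection, hB]

end PlaneStrain

/-- In the plane-strain Amor model, the element stiffness product `Bᵀ·ℂ·B` is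
symmetric whenever the third row of `B` vanishes, even though the tangent modulus
`ℂ = g·Cᵉ·((h−1)P + I) + h′·Cᵉ·P` is not symmetric. -/
theorem stmt6 (lam mu g h h' : ℝ) :
    let Ce : Matrix (Fin 4) (Fin 4) ℝ :=
      !![lam + 2 * mu, lam, lam, 0;
         lam, lam + 2 * mu, lam, 0;
         lam, lam, lam + 2 * mu, 0;
         0, 0, 0, mu]
    let P : Matrix (Fin 4) (Fin 4) ℝ :=
      (1 / 2 : ℝ) • !![1, 1, 0, 0; 1, 1, 0, 0; 0, 0, 0, 0; 0, 0, 0, 0]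
    let C : Matrix (Fin 4) (Fin 4) ℝ :=
      g • (Ce * ((h - 1) • P + 1)) + h' • (Ce * P)
    ∀ (m : ℕ) (B : Matrix (Fin 4) (Fin m) ℝ),
      (∀ j, B 2 j = 0) → (Bᵀ * C * B).IsSymm := by
  intro Ce P C m B hB
  have hC : C = g • Ce + (g * (h - 1) + h') • (Ce * P) := by
    simp only [C, Matrix.mul_add, Matrix.mul_one, Matrix.mul_smul]
    module
  refine isSymm_transpose_mul_mul_of_mul_eq ?_ (inPlaneProjection_mul_of_row_two_eq_zero hB)
  rw [hC, Matrix.mul_add, Matrix.add_mul, Matrix.mul_smul, Matrix.mul_smul, Matrix.smul_mul,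
    Matrix.smul_mul]
  exact (((elasticModulus_isSymm lam mu).transpose_mul_mul _).smul g).add
    ((inPlaneProjection_conj_elasticModulus_mul_volumetricProjection_isSymm lam mu).smul _)
end
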